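/- Let a satisfy a(1)=1, a(d) = (2d-1)!! − ∑_{k=1}^{d-1}(2d-2k-1)!!·a(k) for d ≥ 2, and let b(d) = ((2d-3)²+1)·(2d-5)!!. Then for all d ≥ 4, b(d) − a(d) > (2d-5)!!. -/

import Mathlib

/-!
Write `S(d) = ∑_{k=1}^{d-1} (2d-2k-1)!! a(k)`, so that the recurrence says `a(d) = (2d-1)!! - S(d)`.
Raising every double factorial in `S(d)` by one step gives `S(d+1) = S(d) + a(d) + ∑_k 2(d-k)(2d-2k-1)!! a(k)`,
and `S(d) + a(d) ≥ (2d-1)!!`. The terms `k = 1, 2` of the remaining sum already exceed `(2d-1)!!`, so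
`S(d+1) > 2 (2d-1)!!` and `a(d+1) < (2d+1)!! - 2 (2d-1)!! = (2d-1)² (2d-3)!!`, which is the claim.
-/

/-- The double factorial `(2d-1)!! = ∏_{i=1}^d (2i-1)`, with `(-1)!! = oddDF 0 = 1`. -/
def oddDF (d : ℕ) : ℕ := ∏ i ∈ Finset.range d, (2 * i + 1)

open Finset

lemma oddDF_succ (n : ℕ) : oddDF (n + 1) = oddDF n * (2 * n + 1) := prod_range_succ _ _

lemma oddDF_pos (n : ℕ) : 0 < oddDF n := prod_pos fun _ _ => by omega

def oddDFConv (a : ℕ → ℕ) (d : ℕ) : ℕ := ∑ k ∈ Icc 1 (d - 1), oddDF (d - k) * a k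

lemma oddDFConv_succ (a : ℕ → ℕ) {n : ℕ} (hn : 1 ≤ n) :
    oddDFConv a (n + 1) =
      oddDFConv a n + a n + ∑ k ∈ Icc 1 (n - 1), 2 * (n - k) * oddDF (n - k) * a k := by
  obtain ⟨m, rfl⟩ : ∃ m, n = m + 1 := ⟨n - 1, by omega⟩
  have hshift : ∀ k ∈ Icc 1 m, oddDF (m + 1 + 1 - k) * a k =
      oddDF (m + 1 - k) * a k + 2 * (m + 1 - k) * oddDF (m + 1 - k) * a k := by
    intro k hk
    rw [mem_Icc] at hk
    rw [show m + 1 + 1 - k = m + 1 - k + 1 by omega, oddDF_succ]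
    ring
  simp only [oddDFConv, Nat.add_sub_cancel]
  rw [sum_Icc_succ_top (by omega), sum_congr rfl hshift, sum_add_distrib,
    show m + 1 + 1 - (m + 1) = 1 by omega, show oddDF 1 = 1 from rfl]
  ring

section

variable {a : ℕ → ℕ} (h1 : a 1 = 1) (hrec : ∀ d, 2 ≤ d → a d = oddDF d - oddDFConv a d)
include h1 hrec

lemma a_two : a 2 = 2 := by
  rw [hrec 2 le_rfl]
  simp [oddDFConv, oddDF, prod_range_succ, h1]

lemma two_mul_oddDF_lt_oddDFConv {n : ℕ} (hn : 3 ≤ n) : 2 * oddDF n < oddDFConv a (n + 1) := by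
  obtain ⟨m, rfl⟩ : ∃ m, n = m + 3 := ⟨n - 3, by omega⟩
  have hsolve : oddDF (m + 3) ≤ oddDFConv a (m + 3) + a (m + 3) := by
    have := hrec (m + 3) (by omega)
    omega
  have hterms : 2 * (m + 2) * oddDF (m + 2) * a 1 + 2 * (m + 1) * oddDF (m + 1) * a 2 ≤
      ∑ k ∈ Icc 1 (m + 3 - 1), 2 * (m + 3 - k) * oddDF (m + 3 - k) * a k :=
    add_le_sum (f := fun k => 2 * (m + 3 - k) * oddDF (m + 3 - k) * a k) (i := 1) (j := 2)
      (fun _ _ => Nat.zero_le _) (by simp) (by simp) (by decide)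
  rw [h1, a_two h1 hrec] at hterms
  have hpos := oddDF_pos (m + 1)
  rw [oddDFConv_succ a (by omega), oddDF_succ (m + 2), oddDF_succ (m + 1)]
  rw [oddDF_succ (m + 2), oddDF_succ (m + 1)] at hsolve
  rw [oddDF_succ (m + 1)] at hterms
  nlinarith

lemma add_two_mul_oddDF_lt {n : ℕ} (hn : 3 ≤ n) : a (n + 1) + 2 * oddDF n < oddDF (n + 1) := by
  have hconv := two_mul_oddDF_lt_oddDFConv h1 hrec hn
  have hgrow : 2 * oddDF n < oddDF (n + 1) := by
    rw [oddDF_succ]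
    nlinarith [oddDF_pos n]
  have := hrec (n + 1) (by omega)
  omega

end

/-- If `a(1)=1`, `a(d) = (2d-1)!! − ∑_{k=1}^{d-1}(2d-2k-1)!!·a(k)` for `d ≥ 2`, and
`b(d) = ((2d-3)²+1)·(2d-5)!!`, then `b(d) − a(d) > (2d-5)!!` for all `d ≥ 4`. -/
theorem b_minus_a (a b : ℕ → ℕ) (h1 : a 1 = 1)
    (hrec : ∀ d, 2 ≤ d → a d = oddDF d - ∑ k ∈ Finset.Icc 1 (d - 1), oddDF (d - k) * a k)
    (hb : ∀ d, b d = ((2 * d - 3) ^ 2 + 1) * oddDF (d - 2)) :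
    ∀ d, 4 ≤ d → oddDF (d - 2) < b d - a d := by
  intro d hd
  obtain ⟨m, rfl⟩ : ∃ m, d = m + 4 := ⟨d - 4, by omega⟩
  have key := add_two_mul_oddDF_lt h1 hrec (n := m + 3) (by omega)
  rw [oddDF_succ (m + 3), oddDF_succ (m + 2), show m + 3 + 1 = m + 4 from rfl] at key
  have hfactor : ((2 * (m + 4) - 3) ^ 2 + 1) * oddDF (m + 2) + 2 * (oddDF (m + 2) * (2 * (m + 2) + 1))
      = oddDF (m + 2) * (2 * (m + 2) + 1) * (2 * (m + 3) + 1) + oddDF (m + 2) := by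
    rw [show 2 * (m + 4) - 3 = 2 * m + 5 by omega]
    ring
  rw [hb, show m + 4 - 2 = m + 2 by omega]
  omega
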